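/- arXiv:1407.3367 — 4 statements merged into one kernel-verified Lean document; each statement's English description precedes it below -/
import Mathlib

section
/- Let A = Aᵀ be a symmetric matrix with non-negative off-diagonal entries on a finite set Ω, g a strictly positive eigenvector of A with eigenvalue 0, G = diag(g), and L = G⁻¹AG the associated Markov generator. If S commutes with A, then D := G⁻¹SG⁻¹ satisfies LD = DLᵀ, i.e., G⁻¹SG⁻¹ is a self-duality function for L. -/
open Matrix

/-- Let A = Aᵀ have non-negative off-diagonal entries, g > 0 with Ag = 0, G = diag(g),
L = G⁻¹AG. If S commutes with A, then D = G⁻¹SG⁻¹ satisfies LD = DLᵀ. -/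
theorem stmt10 {Ω : Type*} [Fintype Ω] [DecidableEq Ω] (A S : Matrix Ω Ω ℝ)
    (hsym : Aᵀ = A) (hoff : ∀ x y, x ≠ y → 0 ≤ A x y)
    (g : Ω → ℝ) (hg : ∀ x, 0 < g x) (h0 : A.mulVec g = 0) (hS : S * A = A * S) :
    ((Matrix.diagonal g)⁻¹ * A * Matrix.diagonal g) *
        ((Matrix.diagonal g)⁻¹ * S * (Matrix.diagonal g)⁻¹)
      = ((Matrix.diagonal g)⁻¹ * S * (Matrix.diagonal g)⁻¹) *
        ((Matrix.diagonal g)⁻¹ * A * Matrix.diagonal g)ᵀ := by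
  have hne : ∀ x, g x ≠ 0 := fun x => (hg x).ne'
  have hGG : Matrix.diagonal g * Matrix.diagonal (fun x => (g x)⁻¹) = 1 := by
    rw [Matrix.diagonal_mul_diagonal]
    simp [mul_inv_cancel₀, hne, Matrix.diagonal_one]
  have hGG' : Matrix.diagonal (fun x => (g x)⁻¹) * Matrix.diagonal g = 1 := by
    rw [Matrix.diagonal_mul_diagonal]
    simp [inv_mul_cancel₀, hne, Matrix.diagonal_one]
  have hinv : (Matrix.diagonal g)⁻¹ = Matrix.diagonal (fun x => (g x)⁻¹) :=
    Matrix.inv_eq_right_inv hGG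
  rw [hinv]
  rw [Matrix.transpose_mul, Matrix.transpose_mul, Matrix.diagonal_transpose,
    Matrix.diagonal_transpose, hsym]
  calc Matrix.diagonal (fun x => (g x)⁻¹) * A * Matrix.diagonal g *
        (Matrix.diagonal (fun x => (g x)⁻¹) * S * Matrix.diagonal (fun x => (g x)⁻¹))
      = Matrix.diagonal (fun x => (g x)⁻¹) * (A * S) * Matrix.diagonal (fun x => (g x)⁻¹) := by
        rw [show Matrix.diagonal (fun x => (g x)⁻¹) * A * Matrix.diagonal g *
            (Matrix.diagonal (fun x => (g x)⁻¹) * S * Matrix.diagonal (fun x => (g x)⁻¹)) =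
            Matrix.diagonal (fun x => (g x)⁻¹) * A *
            (Matrix.diagonal g * Matrix.diagonal (fun x => (g x)⁻¹)) * S *
            Matrix.diagonal (fun x => (g x)⁻¹) by noncomm_ring]
        rw [hGG]; noncomm_ring
    _ = Matrix.diagonal (fun x => (g x)⁻¹) * (S * A) * Matrix.diagonal (fun x => (g x)⁻¹) := by
        rw [hS]
    _ = Matrix.diagonal (fun x => (g x)⁻¹) * S * Matrix.diagonal (fun x => (g x)⁻¹) *
        (Matrix.diagonal g * (A * Matrix.diagonal (fun x => (g x)⁻¹))) := by
        rw [show Matrix.diagonal (fun x => (g x)⁻¹) * S * Matrix.diagonal (fun x => (g x)⁻¹) *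
            (Matrix.diagonal g * (A * Matrix.diagonal (fun x => (g x)⁻¹))) =
            Matrix.diagonal (fun x => (g x)⁻¹) * S *
            (Matrix.diagonal (fun x => (g x)⁻¹) * Matrix.diagonal g) *
            (A * Matrix.diagonal (fun x => (g x)⁻¹)) by noncomm_ring]
        rw [hGG']; noncomm_ring
end

section
/- (Reversible product measures for ASEP(q,j) on {1,...,L}) For q ∈ (0,1), j ∈ ℕ/2, α > 0, the product measure on {0,...,2j}^L with marginals P(η_i = n) = (α^n / Z_i) · binom(2j,n)_q · q^{2n(1+j-2ji)} satisfies detailed balance for the ASEP(q,j) generator: μ(η)·c(η,η^{i,i+1}) = μ(η^{i,i+1})·c(η^{i,i+1},η), where c(η,η^{i,i+1}) = q^{η_i - η_{i+1} - (2j+1)}[η_i]_q[2j-η_{i+1}]_q and c(η,η^{i+1,i}) = q^{η_i - η_{i+1} + (2j+1)}[2j-η_i]_q[η_{i+1}]_q. -/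
/-- The q-number [n]_q = (q^n - q^{-n})/(q - q^{-1}). -/
noncomputable def qNum (q : ℝ) (n : ℕ) : ℝ := (q ^ n - q⁻¹ ^ n) / (q - q⁻¹)

/-- The q-factorial [n]_q!. -/
noncomputable def qFact (q : ℝ) (n : ℕ) : ℝ := ∏ k ∈ Finset.Icc 1 n, qNum q k

/-- The q-binomial coefficient. -/
noncomputable def qBinom (q : ℝ) (n k : ℕ) : ℝ := qFact q n / (qFact q k * qFact q (n - k))

/-- Normalization Z_i for the ASEP(q,j) marginal at site i (J = 2j). -/
noncomputable def Zconst (q α : ℝ) (J i : ℕ) : ℝ :=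
  ∑ n ∈ Finset.range (J + 1),
    qBinom q J n * α ^ n * q ^ ((n : ℤ) * (2 + (J : ℤ) - 2 * J * i))

/-- The marginal P(η_i = n) = (α^n/Z_i) binom(2j,n)_q q^{2n(1+j-2ji)}, with J = 2j. -/
noncomputable def marg (q α : ℝ) (J i n : ℕ) : ℝ :=
  α ^ n / Zconst q α J i * qBinom q J n * q ^ ((n : ℤ) * (2 + (J : ℤ) - 2 * J * i))

/-- Configuration obtained from η by moving one particle from site i to site i+1. -/
def moveR (η : ℕ → ℕ) (i : ℕ) : ℕ → ℕ :=
  fun k => if k = i then η i - 1 else if k = i + 1 then η (i + 1) + 1 else η k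

/-!
Detailed balance is local: moving a particle from site `i` to site `i + 1` changes only the two
marginals at `i` and `i + 1`. There the ratio of q-binomials is
`binom(J, a) [a]_q = binom(J, a - 1) [J - a + 1]_q`, which cancels the `q`-numbers in the rates,
and the site-dependent factor `q^{-2Jn i}` of the marginals supplies exactly the `q^{2J}`
separating the exponents of the two rates.
-/

/-- The rate `c(η, η^{i,i+1})` when `η_i = a` and `η_{i+1} = b`. -/
noncomputable def rightJumpRate (q : ℝ) (J a b : ℕ) : ℝ :=
  q ^ ((a : ℤ) - b - (J + 1)) * qNum q a * qNum q (J - b)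

/-- The rate `c(η, η^{i+1,i})` when `η_i = a` and `η_{i+1} = b`. -/
noncomputable def leftJumpRate (q : ℝ) (J a b : ℕ) : ℝ :=
  q ^ ((a : ℤ) - b + (J + 1)) * qNum q (J - a) * qNum q b

theorem Finset.prod_mul_eq_prod_mul_of_eqOn_erase_pair {ι M : Type*} [CommMonoid M]
    [DecidableEq ι] {s : Finset ι} {a b : ι} (ha : a ∈ s) (hb : b ∈ s) (hab : a ≠ b)
    {f g : ι → M} (hfg : ∀ k ∈ s, k ≠ a → k ≠ b → f k = g k) {x y : M}
    (h : f a * f b * x = g a * g b * y) :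
    (∏ k ∈ s, f k) * x = (∏ k ∈ s, g k) * y := by
  have hb' : b ∈ s.erase a := Finset.mem_erase.mpr ⟨hab.symm, hb⟩
  have hrest : ∏ k ∈ (s.erase a).erase b, f k = ∏ k ∈ (s.erase a).erase b, g k :=
    Finset.prod_congr rfl fun k hk => by
      obtain ⟨hkb, hk'⟩ := Finset.mem_erase.mp hk
      obtain ⟨hka, hks⟩ := Finset.mem_erase.mp hk'
      exact hfg k hks hka hkb
  rw [← Finset.prod_erase_mul s f ha, ← Finset.prod_erase_mul s g ha,
    ← Finset.prod_erase_mul _ f hb', ← Finset.prod_erase_mul _ g hb', hrest]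
  calc _ = (∏ k ∈ (s.erase a).erase b, g k) * (f a * f b * x) := by ac_rfl
    _ = (∏ k ∈ (s.erase a).erase b, g k) * (g a * g b * y) := by rw [h]
    _ = _ := by ac_rfl

section QCalculus

variable {q : ℝ}

theorem qNum_ne_zero (hq0 : 0 < q) (hq1 : q ≠ 1) {k : ℕ} (hk : k ≠ 0) : qNum q k ≠ 0 := by
  have hinv : q ≠ q⁻¹ := fun h => by
    rcases self_eq_inv₀.mp h with h | h | h
    · linarith
    · linarith
    · exact hq1 h
  refine div_ne_zero (sub_ne_zero.mpr fun h => hinv ?_) (sub_ne_zero.mpr hinv)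
  exact (pow_left_inj₀ hq0.le (inv_nonneg.mpr hq0.le) hk).mp h

theorem qFact_ne_zero (hq0 : 0 < q) (hq1 : q ≠ 1) (n : ℕ) : qFact q n ≠ 0 :=
  Finset.prod_ne_zero_iff.mpr fun _ hk =>
    qNum_ne_zero hq0 hq1 (Nat.one_le_iff_ne_zero.mp (Finset.mem_Icc.mp hk).1)

theorem qFact_succ (q : ℝ) (n : ℕ) : qFact q (n + 1) = qFact q n * qNum q (n + 1) :=
  Finset.prod_Icc_succ_top (by omega) _

theorem qBinom_succ_mul_qNum (hq0 : 0 < q) (hq1 : q ≠ 1) {J c : ℕ} (hc : c < J) :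
    qBinom q J (c + 1) * qNum q (c + 1) = qBinom q J c * qNum q (J - c) := by
  have hJc : qFact q (J - c) = qFact q (J - (c + 1)) * qNum q (J - c) := by
    rw [show J - c = J - (c + 1) + 1 by omega, qFact_succ]
  have := qNum_ne_zero hq0 hq1 (Nat.succ_ne_zero c)
  have := qNum_ne_zero hq0 hq1 (Nat.sub_ne_zero_of_lt hc)
  have := qFact_ne_zero hq0 hq1 c
  have := qFact_ne_zero hq0 hq1 (J - (c + 1))
  rw [qBinom, qBinom, qFact_succ, hJc]
  field_simp

end QCalculus

theorem marg_mul_marg_mul_rightJumpRate (q α : ℝ) (hq0 : 0 < q) (hq1 : q ≠ 1)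
    {J c d : ℕ} (hc : c < J) (hd : d < J) (i : ℕ) :
    marg q α J i (c + 1) * marg q α J (i + 1) d * rightJumpRate q J (c + 1) d
      = marg q α J i c * marg q α J (i + 1) (d + 1) * leftJumpRate q J c (d + 1) := by
  set E : ℕ → ℤ := fun k => 2 + (J : ℤ) - 2 * J * k with hE
  have hpow : q ^ (((c + 1 : ℕ) : ℤ) * E i) * q ^ ((d : ℤ) * E (i + 1))
        * q ^ (((c + 1 : ℕ) : ℤ) - d - (J + 1))
      = q ^ ((c : ℤ) * E i) * q ^ (((d + 1 : ℕ) : ℤ) * E (i + 1))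
        * q ^ ((c : ℤ) - (d + 1 : ℕ) + (J + 1)) := by
    simp only [← zpow_add₀ hq0.ne', hE]
    congr 1
    push_cast
    ring
  have hBc := qBinom_succ_mul_qNum hq0 hq1 hc
  have hBd := qBinom_succ_mul_qNum hq0 hq1 hd
  simp only [marg, rightJumpRate, leftJumpRate] at hBc hBd ⊢
  calc _ = α ^ (c + 1) * α ^ d / (Zconst q α J i * Zconst q α J (i + 1))
          * (qBinom q J (c + 1) * qNum q (c + 1)) * (qBinom q J d * qNum q (J - d))
          * (q ^ (((c + 1 : ℕ) : ℤ) * E i) * q ^ ((d : ℤ) * E (i + 1))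
            * q ^ (((c + 1 : ℕ) : ℤ) - d - (J + 1))) := by ring
    _ = α ^ (c + 1) * α ^ d / (Zconst q α J i * Zconst q α J (i + 1))
          * (qBinom q J c * qNum q (J - c)) * (qBinom q J (d + 1) * qNum q (d + 1))
          * (q ^ ((c : ℤ) * E i) * q ^ (((d + 1 : ℕ) : ℤ) * E (i + 1))
            * q ^ ((c : ℤ) - (d + 1 : ℕ) + (J + 1))) := by rw [hBc, ← hBd, hpow]
    _ = _ := by ring

theorem stmt11_general (q α : ℝ) (hq0 : 0 < q) (hq1 : q < 1)
    (J L : ℕ) (η : ℕ → ℕ) (hb : ∀ k, η k ≤ J)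
    (i : ℕ) (hi : 1 ≤ i) (hiL : i + 1 ≤ L) (h1 : 1 ≤ η i) (h2 : η (i + 1) < J) :
    (∏ k ∈ Finset.Icc 1 L, marg q α J k (η k)) *
        (q ^ ((η i : ℤ) - η (i + 1) - (J + 1)) * qNum q (η i) * qNum q (J - η (i + 1)))
      = (∏ k ∈ Finset.Icc 1 L, marg q α J k (moveR η i k)) *
        (q ^ ((moveR η i i : ℤ) - moveR η i (i + 1) + (J + 1)) *
          qNum q (J - moveR η i i) * qNum q (moveR η i (i + 1))) := by
  obtain ⟨c, hc⟩ : ∃ c, η i = c + 1 := ⟨η i - 1, by omega⟩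
  have hmove_left : moveR η i i = c := by simp [moveR, hc]
  have hmove_right : moveR η i (i + 1) = η (i + 1) + 1 := by simp [moveR]
  refine Finset.prod_mul_eq_prod_mul_of_eqOn_erase_pair
    (f := fun k => marg q α J k (η k)) (g := fun k => marg q α J k (moveR η i k))
    (Finset.mem_Icc.mpr ⟨hi, by omega⟩) (Finset.mem_Icc.mpr ⟨by omega, hiL⟩) (by omega)
    (fun k _ hki hki' => by simp [moveR, hki, hki']) ?_
  change _ * rightJumpRate q J (η i) (η (i + 1))
    = _ * leftJumpRate q J (moveR η i i) (moveR η i (i + 1))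
  rw [hmove_left, hmove_right, hc]
  exact marg_mul_marg_mul_rightJumpRate q α hq0 hq1.ne (by have := hb i; omega) h2 i

/-- (Reversible product measures for ASEP(q,j) on {1,...,L}) The product measure with
marginals `marg` satisfies detailed balance for the ASEP(q,j) rates (here J = 2j). -/
theorem stmt11 (q α : ℝ) (hq0 : 0 < q) (hq1 : q < 1) (hα : 0 < α)
    (J L : ℕ) (hJ : 1 ≤ J) (η : ℕ → ℕ) (hb : ∀ k, η k ≤ J)
    (i : ℕ) (hi : 1 ≤ i) (hiL : i + 1 ≤ L) (h1 : 1 ≤ η i) (h2 : η (i + 1) < J) :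
    (∏ k ∈ Finset.Icc 1 L, marg q α J k (η k)) *
        (q ^ ((η i : ℤ) - η (i + 1) - (J + 1)) * qNum q (η i) * qNum q (J - η (i + 1)))
      = (∏ k ∈ Finset.Icc 1 L, marg q α J k (moveR η i k)) *
        (q ^ ((moveR η i i : ℤ) - moveR η i (i + 1) + (J + 1)) *
          qNum q (J - moveR η i i) * qNum q (moveR η i (i + 1))) :=
  stmt11_general q α hq0 hq1 J L η hb i hi hiL h1 h2
end

section
/- The detailed balance condition for a product measure μ = ⊗μ_i under the ASEP(q,j) dynamics holds if and only if μ_i(η_i - 1)μ_{i+1}(η_{i+1}+1)·q^{2j}·[2j-η_i+1]_q·[η_{i+1}+1]_q = μ_i(η_i)μ_{i+1}(η_{i+1})·q^{-2j}·[η_i]_q·[2j-η_{i+1}]_q for all admissible η_i, η_{i+1}, which forces the ratio μ_i(n)/μ_i(n-1) = β q^{-4ji} [2j-n+1]_q/[n]_q for some constant β independent of i and n. -/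
/-- The two-site equation forced by detailed balance (J = 2j):
μ_i(a-1)μ_{i+1}(b+1) q^{2j} [2j-a+1]_q [b+1]_q = μ_i(a)μ_{i+1}(b) q^{-2j} [a]_q [2j-b]_q. -/
def twoSiteEq (q : ℝ) (J : ℕ) (μ : ℕ → ℕ → ℝ) (i a b : ℕ) : Prop :=
  μ i (a - 1) * μ (i + 1) (b + 1) * q ^ (J : ℤ) * qNum q (J - a + 1) * qNum q (b + 1)
    = μ i a * μ (i + 1) b * q ^ (-(J : ℤ)) * qNum q a * qNum q (J - b)

open Finset

lemma qNum_inv (q : ℝ) (n : ℕ) : qNum q⁻¹ n = qNum q n := by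
  rw [qNum, qNum, inv_inv, ← neg_sub (q ^ n), ← neg_sub q, neg_div_neg_eq]

lemma qNum_pos_of_lt_one {q : ℝ} (hq0 : 0 < q) (hq1 : q < 1) {n : ℕ} (hn : 1 ≤ n) :
    0 < qNum q n := by
  have h1 : 1 < q⁻¹ := (one_lt_inv_iff₀).2 ⟨hq0, hq1⟩
  have h2 : q ^ n < 1 := pow_lt_one₀ hq0.le hq1 (by omega)
  have h3 : 1 < q⁻¹ ^ n := one_lt_pow₀ h1 (by omega)
  exact div_pos_of_neg_of_neg (by linarith) (by linarith)

lemma qNum_pos {q : ℝ} (hq0 : 0 < q) (hq : q ≠ 1) {n : ℕ} (hn : 1 ≤ n) : 0 < qNum q n := by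
  rcases hq.lt_or_gt with hq1 | hq1
  · exact qNum_pos_of_lt_one hq0 hq1 hn
  · rw [← qNum_inv]
    exact qNum_pos_of_lt_one (inv_pos.2 hq0) (inv_lt_one_of_one_lt₀ hq1) hn

lemma Finset.prod_eq_mul_mul_prod_erase_erase {ι M : Type*} [DecidableEq ι] [CommMonoid M]
    {s : Finset ι} {i j : ι} (hi : i ∈ s) (hj : j ∈ s) (hij : i ≠ j) (f : ι → M) :
    ∏ k ∈ s, f k = f i * f j * ∏ k ∈ (s.erase i).erase j, f k := by
  rw [mul_assoc, mul_prod_erase _ f (mem_erase.2 ⟨hij.symm, hj⟩), mul_prod_erase _ f hi]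

section moveR

variable (η : ℕ → ℕ) (i : ℕ)

@[simp] lemma moveR_self : moveR η i i = η i - 1 := by simp [moveR]

@[simp] lemma moveR_succ : moveR η i (i + 1) = η (i + 1) + 1 := by simp [moveR]

lemma moveR_of_ne {k : ℕ} (hki : k ≠ i) (hki' : k ≠ i + 1) : moveR η i k = η k := by
  simp [moveR, hki, hki']

end moveR

/-- `μ(η) c(η, η^{i,i+1}) = μ(η^{i,i+1}) c(η^{i,i+1}, η)` with `J = 2j`, the product measure
restricted to the sites `1, …, L`. -/
def DetailedBalanceAt (q : ℝ) (J L : ℕ) (μ : ℕ → ℕ → ℝ) (η : ℕ → ℕ) (i : ℕ) : Prop :=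
  (∏ k ∈ Icc 1 L, μ k (η k)) *
      (q ^ ((η i : ℤ) - η (i + 1) - (J + 1)) * qNum q (η i) * qNum q (J - η (i + 1)))
    = (∏ k ∈ Icc 1 L, μ k (moveR η i k)) *
      (q ^ ((moveR η i i : ℤ) - moveR η i (i + 1) + (J + 1)) *
        qNum q (J - moveR η i i) * qNum q (moveR η i (i + 1)))

lemma detailedBalanceAt_iff_twoSiteEq {q : ℝ} (hq0 : 0 < q) {J L : ℕ} {μ : ℕ → ℕ → ℝ}
    (hμ : ∀ i n, 1 ≤ i → i ≤ L → n ≤ J → μ i n ≠ 0) {η : ℕ → ℕ} (hη : ∀ k, η k ≤ J) {i : ℕ}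
    (hi : 1 ≤ i) (hiL : i + 1 ≤ L) (ha : 1 ≤ η i) :
    DetailedBalanceAt q J L μ η i ↔ twoSiteEq q J μ i (η i) (η (i + 1)) := by
  set s := ((Icc 1 L).erase i).erase (i + 1)
  have hsplit (f : ℕ → ℝ) : ∏ k ∈ Icc 1 L, f k = f i * f (i + 1) * ∏ k ∈ s, f k :=
    prod_eq_mul_mul_prod_erase_erase (by simp; omega) (by simp; omega) (by omega) f
  have hs : ∀ k ∈ s, 1 ≤ k ∧ k ≤ L ∧ k ≠ i ∧ k ≠ i + 1 := by
    intro k hk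
    simp only [s, mem_erase, mem_Icc] at hk
    omega
  have hrest : ∏ k ∈ s, μ k (moveR η i k) = ∏ k ∈ s, μ k (η k) :=
    prod_congr rfl fun k hk => by rw [moveR_of_ne η i (hs k hk).2.2.1 (hs k hk).2.2.2]
  have hR : ∏ k ∈ s, μ k (η k) ≠ 0 :=
    prod_ne_zero_iff.2 fun k hk => hμ k (η k) (hs k hk).1 (hs k hk).2.1 (hη k)
  set X := q ^ ((η i : ℤ) - η (i + 1) - 1)
  have hX : X ≠ 0 := zpow_ne_zero _ hq0.ne'
  have hpowL : q ^ ((η i : ℤ) - η (i + 1) - (J + 1)) = X * q ^ (-(J : ℤ)) := by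
    rw [← zpow_add₀ hq0.ne']; ring_nf
  have hpowR : q ^ (((η i - 1 : ℕ) : ℤ) - (η (i + 1) + 1 : ℕ) + (J + 1)) = X * q ^ (J : ℤ) := by
    rw [← zpow_add₀ hq0.ne', Nat.cast_sub ha]; push_cast; ring_nf
  have hJa : J - (η i - 1) = J - η i + 1 := by have := hη i; omega
  unfold DetailedBalanceAt twoSiteEq
  rw [hsplit, hsplit, hrest, moveR_self, moveR_succ, hpowL, hpowR, hJa, eq_comm]
  constructor
  · intro h
    apply mul_left_cancel₀ (mul_ne_zero hR hX)
    linear_combination h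
  · intro h
    linear_combination (∏ k ∈ s, μ k (η k)) * X * h

section normalizedRatio

variable (q : ℝ) (J : ℕ) (μ : ℕ → ℕ → ℝ)

/-- `μ i n / μ i (n-1)` divided by the `n`-dependence `[2j-n+1]_q / [n]_q` it should have. -/
noncomputable def normalizedRatio (i n : ℕ) : ℝ :=
  μ i n / μ i (n - 1) * qNum q n / qNum q (J - n + 1)

variable {q J μ}

lemma div_eq_normalizedRatio_mul (hq0 : 0 < q) (hq : q ≠ 1) {i n : ℕ} (hn : 1 ≤ n) :
    μ i n / μ i (n - 1) = normalizedRatio q J μ i n * qNum q (J - n + 1) / qNum q n := by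
  have h1 := (qNum_pos hq0 hq hn).ne'
  have h2 := (qNum_pos hq0 hq (n := J - n + 1) (by omega)).ne'
  rw [normalizedRatio]
  field_simp

lemma normalizedRatio_eq_mul_of_twoSiteEq (hq0 : 0 < q) (hq : q ≠ 1) {i a b : ℕ} (hbJ : b < J)
    (hμa : μ i (a - 1) ≠ 0) (hμb : μ (i + 1) b ≠ 0) (h : twoSiteEq q J μ i a b) :
    normalizedRatio q J μ i a = q ^ (2 * J) * normalizedRatio q J μ (i + 1) (b + 1) := by
  have h1 := (qNum_pos hq0 hq (n := J - a + 1) (by omega)).ne'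
  have h2 := (qNum_pos hq0 hq (n := J - b) (by omega)).ne'
  have hqJ : q ^ J ≠ 0 := pow_ne_zero _ hq0.ne'
  rw [twoSiteEq, zpow_neg, zpow_natCast] at h
  rw [normalizedRatio, normalizedRatio, Nat.add_sub_cancel, show J - (b + 1) + 1 = J - b by omega]
  field_simp at h ⊢
  linear_combination -h

end normalizedRatio

lemma exists_eq_mul_zpow_of_eq_mul_succ {g : ℕ → ℕ → ℝ} {Q : ℝ} (hQ : Q ≠ 0) {J L : ℕ}
    (hL : 2 ≤ L)
    (hg : ∀ i a b, 1 ≤ i → i + 1 ≤ L → 1 ≤ a → a ≤ J → b < J → g i a = Q * g (i + 1) (b + 1)) :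
    ∃ β : ℝ, ∀ i n, 1 ≤ i → i ≤ L → 1 ≤ n → n ≤ J → g i n = β * Q ^ (-(i : ℤ)) := by
  refine ⟨g 1 1 * Q, fun i n hi => ?_⟩
  induction i, hi using Nat.le_induction generalizing n with
  | base =>
    intro _ hn hnJ
    rw [hg 1 n 0 le_rfl hL hn hnJ (by omega), ← hg 1 1 0 le_rfl hL le_rfl (by omega) (by omega),
      Nat.cast_one, zpow_neg_one, mul_inv_cancel_right₀ hQ]
  | succ i hi ih =>
    intro hiL hn hnJ
    have hstep := hg i 1 (n - 1) hi hiL le_rfl (by omega) (by omega)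
    rw [Nat.sub_add_cancel hn, ih 1 (by omega) le_rfl (by omega)] at hstep
    rw [eq_inv_mul_iff_mul_eq₀ hQ |>.2 hstep.symm, Nat.cast_succ, neg_add, zpow_add₀ hQ]
    field_simp

theorem stmt12_general (q : ℝ) (hq0 : 0 < q) (hq1 : q < 1) (J L : ℕ) (hL : 2 ≤ L)
    (μ : ℕ → ℕ → ℝ) (hμ : ∀ i n, 1 ≤ i → i ≤ L → n ≤ J → 0 < μ i n) :
    ((∀ η : ℕ → ℕ, (∀ k, η k ≤ J) → ∀ i, 1 ≤ i → i + 1 ≤ L →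
        1 ≤ η i → η (i + 1) < J →
        (∏ k ∈ Finset.Icc 1 L, μ k (η k)) *
            (q ^ ((η i : ℤ) - η (i + 1) - (J + 1)) * qNum q (η i) * qNum q (J - η (i + 1)))
          = (∏ k ∈ Finset.Icc 1 L, μ k (moveR η i k)) *
            (q ^ ((moveR η i i : ℤ) - moveR η i (i + 1) + (J + 1)) *
              qNum q (J - moveR η i i) * qNum q (moveR η i (i + 1)))) ↔
      (∀ i a b, 1 ≤ i → i + 1 ≤ L → 1 ≤ a → a ≤ J → b < J → twoSiteEq q J μ i a b)) ∧
    ((∀ i a b, 1 ≤ i → i + 1 ≤ L → 1 ≤ a → a ≤ J → b < J → twoSiteEq q J μ i a b) →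
      ∃ β : ℝ, ∀ i n, 1 ≤ i → i ≤ L → 1 ≤ n → n ≤ J →
        μ i n / μ i (n - 1)
          = β * q ^ (-(2 * (J : ℤ) * i)) * qNum q (J - n + 1) / qNum q n) := by
  have hq : q ≠ 1 := hq1.ne
  have hμ0 i n hi hiL hnJ : μ i n ≠ 0 := (hμ i n hi hiL hnJ).ne'
  refine ⟨⟨fun h i a b hi hiL ha haJ hb => ?_, fun h η hη i hi hiL ha hb => ?_⟩, fun h => ?_⟩
  · let η : ℕ → ℕ := fun k => if k = i then a else b
    have hη : ∀ k, η k ≤ J := fun k => by dsimp only [η]; split_ifs <;> omega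
    simpa [η] using (detailedBalanceAt_iff_twoSiteEq hq0 hμ0 hη hi hiL (by simpa [η])).1
      (h η hη i hi hiL (by simpa [η]) (by simpa [η]))
  · exact (detailedBalanceAt_iff_twoSiteEq hq0 hμ0 hη hi hiL ha).2
      (h i (η i) (η (i + 1)) hi hiL ha (hη i) hb)
  · obtain ⟨β, hβ⟩ := exists_eq_mul_zpow_of_eq_mul_succ (pow_ne_zero (2 * J) hq0.ne') hL
      fun i a b hi hiL ha haJ hb => normalizedRatio_eq_mul_of_twoSiteEq hq0 hq hb
        (hμ0 i (a - 1) hi (by omega) (by omega)) (hμ0 (i + 1) b (by omega) hiL hb.le)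
        (h i a b hi hiL ha haJ hb)
    refine ⟨β, fun i n hi hiL hn hnJ => ?_⟩
    rw [div_eq_normalizedRatio_mul hq0 hq hn, hβ i n hi hiL hn hnJ, ← zpow_natCast,
      ← zpow_mul]
    push_cast
    ring_nf

/-- Detailed balance of the product measure ⊗μ_i under ASEP(q,j) holds iff the two-site
equation holds for all admissible values, which forces
μ_i(n)/μ_i(n-1) = β q^{-4ji} [2j-n+1]_q/[n]_q for some β (J = 2j). -/
theorem stmt12 (q : ℝ) (hq0 : 0 < q) (hq1 : q < 1) (J L : ℕ) (hJ : 1 ≤ J) (hL : 2 ≤ L)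
    (μ : ℕ → ℕ → ℝ) (hμ : ∀ i n, 1 ≤ i → i ≤ L → n ≤ J → 0 < μ i n) :
    ((∀ η : ℕ → ℕ, (∀ k, η k ≤ J) → ∀ i, 1 ≤ i → i + 1 ≤ L →
        1 ≤ η i → η (i + 1) < J →
        (∏ k ∈ Finset.Icc 1 L, μ k (η k)) *
            (q ^ ((η i : ℤ) - η (i + 1) - (J + 1)) * qNum q (η i) * qNum q (J - η (i + 1)))
          = (∏ k ∈ Finset.Icc 1 L, μ k (moveR η i k)) *
            (q ^ ((moveR η i i : ℤ) - moveR η i (i + 1) + (J + 1)) *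
              qNum q (J - moveR η i i) * qNum q (moveR η i (i + 1)))) ↔
      (∀ i a b, 1 ≤ i → i + 1 ≤ L → 1 ≤ a → a ≤ J → b < J → twoSiteEq q J μ i a b)) ∧
    ((∀ i a b, 1 ≤ i → i + 1 ≤ L → 1 ≤ a → a ≤ J → b < J → twoSiteEq q J μ i a b) →
      ∃ β : ℝ, ∀ i n, 1 ≤ i → i ≤ L → 1 ≤ n → n ≤ J →
        μ i n / μ i (n - 1)
          = β * q ^ (-(2 * (J : ℤ) * i)) * qNum q (J - n + 1) / qNum q n) :=
  stmt12_general q hq0 hq1 J L hL μ hμ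
end

section
/- (No translation invariant product measure for j = 1) For q ∈ (0,1), there is no function g : {0,1,2} → ℝ and no single-site probability measure μ on {0,1,2} with μ(n) > 0 such that F(ξ₁,ξ₂) = g(ξ₁) - g(ξ₂) for all ξ₁,ξ₂ ∈ {0,1,2}, where F(ξ₁,ξ₂) = q^{ξ₁-ξ₂-1}[ξ₁+1]_q[3-ξ₂]_q μ(ξ₁+1)μ(ξ₂-1)/(μ(ξ₁)μ(ξ₂)) + q^{ξ₁-ξ₂+1}[ξ₂+1]_q[3-ξ₁]_q μ(ξ₂+1)μ(ξ₁-1)/(μ(ξ₁)μ(ξ₂)) - q^{ξ₁-ξ₂}(q^{-3}+q^{3})[ξ₁]_q[3-ξ₂]_q (with the convention that terms involving μ at arguments outside {0,1,2} are zero). -/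
/-- The q-number [n]_q = (q^n - q^{-n})/(q - q^{-1}) for integer n. -/
noncomputable def qNumZ (q : ℝ) (n : ℤ) : ℝ := (q ^ n - q ^ (-n)) / (q - q⁻¹)

/-- Extension of a single-site measure μ on {0,1,2} by zero outside {0,1,2}. -/
noncomputable def μext (μ : ℕ → ℝ) (n : ℤ) : ℝ :=
  if 0 ≤ n ∧ n ≤ 2 then μ n.toNat else 0

/-- The function F(ξ₁,ξ₂) appearing in the stationarity analysis of ASEP(q,1). -/
noncomputable def Ffun (q : ℝ) (μ : ℕ → ℝ) (a b : ℕ) : ℝ :=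
  q ^ ((a : ℤ) - b - 1) * qNumZ q ((a : ℤ) + 1) * qNumZ q (3 - (b : ℤ)) *
      μext μ ((a : ℤ) + 1) * μext μ ((b : ℤ) - 1) / (μ a * μ b)
    + q ^ ((a : ℤ) - b + 1) * qNumZ q ((b : ℤ) + 1) * qNumZ q (3 - (a : ℤ)) *
      μext μ ((b : ℤ) + 1) * μext μ ((a : ℤ) - 1) / (μ a * μ b)
    - q ^ ((a : ℤ) - b) * (q ^ (-3 : ℤ) + q ^ (3 : ℤ)) * qNumZ q a * qNumZ q (3 - (b : ℤ))

/-- (No translation invariant product measure for j = 1) For q ∈ (0,1) there is no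
function g and no strictly positive single-site probability measure μ on {0,1,2} with
F(ξ₁,ξ₂) = g(ξ₁) - g(ξ₂) for all ξ₁, ξ₂ ∈ {0,1,2}. -/
theorem stmt13 (q : ℝ) (hq0 : 0 < q) (hq1 : q < 1) :
    ¬ ∃ (g : ℕ → ℝ) (μ : ℕ → ℝ),
        (∀ n, n ≤ 2 → 0 < μ n) ∧ (μ 0 + μ 1 + μ 2 = 1) ∧
        (∀ a b, a ≤ 2 → b ≤ 2 → Ffun q μ a b = g a - g b) := by
  rintro ⟨g, μ, hpos, hsum, hF⟩
  have h := hF 2 2 le_rfl le_rfl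
  rw [sub_self] at h
  have hinv : 1 < q⁻¹ := (one_lt_inv_iff₀.mpr ⟨hq0, hq1⟩)
  have hden : q - q⁻¹ < 0 := by linarith
  have h1 : qNumZ q 1 = 1 := by
    unfold qNumZ
    rw [div_eq_one_iff_eq (ne_of_lt hden)]
    norm_num
  have h2 : 0 < qNumZ q 2 := by
    unfold qNumZ
    apply div_pos_of_neg_of_neg _ hden
    have e2 : q ^ (2:ℤ) = q ^ (2:ℕ) := by norm_cast
    have e2' : q ^ (-2:ℤ) = (q ^ (2:ℕ))⁻¹ := by
      rw [zpow_neg, e2]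
    rw [e2, e2']
    have hlt : q ^ (2:ℕ) < 1 := by nlinarith
    have hp : (0:ℝ) < q ^ (2:ℕ) := by positivity
    have : 1 < (q ^ (2:ℕ))⁻¹ := one_lt_inv_iff₀.mpr ⟨hp, hlt⟩
    linarith
  have e : Ffun q μ 2 2 = -(q ^ (0:ℤ) * (q ^ (-3:ℤ) + q ^ (3:ℤ)) * qNumZ q 2 * qNumZ q 1) := by
    unfold Ffun μext
    norm_num
  rw [e, h1] at h
  have hp3 : (0:ℝ) < q ^ (-3:ℤ) + q ^ (3:ℤ) := by positivity
  have hq00 : q ^ (0:ℤ) = 1 := by norm_num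
  rw [hq00] at h
  nlinarith
end
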